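/- Let J be a real m×n matrix and L a real p×n matrix satisfying the completeness condition with constant γ > 0, let F ∈ ℝᵐ with F ≠ 0, set λ = ‖F‖², and let d solve (JᵀJ + λLᵀL)d = −JᵀF. Then ‖d‖ ≤ (1/√γ)·max{ √2/2, ‖F‖ }. -/

import Mathlib

open Matrix

/-- The continuous linear map on Euclidean spaces induced by a real matrix. -/
noncomputable def matCLM {m n : ℕ} (A : Matrix (Fin m) (Fin n) ℝ) :
    EuclideanSpace ℝ (Fin n) →L[ℝ] EuclideanSpace ℝ (Fin m) :=
  LinearMap.toContinuousLinearMap (Matrix.toEuclideanLin A)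

lemma matCLM_mul {m n p : ℕ} (A : Matrix (Fin m) (Fin n) ℝ) (B : Matrix (Fin n) (Fin p) ℝ)
    (v : EuclideanSpace ℝ (Fin p)) : matCLM (A * B) v = matCLM A (matCLM B v) := by
  simp [matCLM, Matrix.toEuclideanLin_apply, Matrix.mulVec_mulVec]

lemma matCLM_add {m n : ℕ} (A B : Matrix (Fin m) (Fin n) ℝ) (v : EuclideanSpace ℝ (Fin n)) :
    matCLM (A + B) v = matCLM A v + matCLM B v := by
  simp [matCLM, map_add]

lemma matCLM_smul {m n : ℕ} (c : ℝ) (A : Matrix (Fin m) (Fin n) ℝ) (v : EuclideanSpace ℝ (Fin n)) :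
    matCLM (c • A) v = c • matCLM A v := by
  simp [matCLM, _root_.map_smul]

lemma matCLM_transpose_inner {m n : ℕ} (A : Matrix (Fin m) (Fin n) ℝ)
    (x : EuclideanSpace ℝ (Fin m)) (y : EuclideanSpace ℝ (Fin n)) :
    inner ℝ (matCLM Aᵀ x) y = (inner ℝ x (matCLM A y) : ℝ) := by
  have h : Aᵀ = Aᴴ := by ext i j; simp [Matrix.conjTranspose]
  rw [matCLM, h, LinearMap.coe_toContinuousLinearMap',
    Matrix.toEuclideanLin_conjTranspose_eq_adjoint, LinearMap.adjoint_inner_left]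
  rfl

lemma lmmss_aux2 (s a b : ℝ) (hs : 0 < s) (ha : 0 ≤ a) (hb : 0 ≤ b)
    (hkey : a ^ 2 + s ^ 2 * b ^ 2 ≤ s * a) : a ^ 2 + b ^ 2 ≤ max (1/2) (s ^ 2) := by
  rcases le_or_gt (1/2) (s ^ 2) with h | h
  · refine le_max_of_le_right ?_
    nlinarith [sq_nonneg (a - s), sq_nonneg b]
  · refine le_max_of_le_left ?_
    nlinarith [sq_nonneg (2 * (1 - s ^ 2) * a - s), sq_nonneg a, sq_nonneg b,
      mul_pos hs hs, mul_pos (mul_pos hs hs) (by nlinarith : (0:ℝ) < 1 - s ^ 2),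
      mul_nonneg (mul_nonneg hs.le ha) (by nlinarith : (0:ℝ) ≤ 1 - 2 * s ^ 2)]

lemma lmmss_aux (γ s t : ℝ) (hγ : 0 < γ) (hs : 0 ≤ s) (ht : 0 ≤ t)
    (h : γ * t ^ 2 ≤ max (1/2) (s ^ 2)) :
    t ≤ (1 / Real.sqrt γ) * max (Real.sqrt 2 / 2) s := by
  have h2 : (Real.sqrt 2 / 2) ^ 2 = 1/2 := by
    rw [div_pow, Real.sq_sqrt (by norm_num : (0:ℝ) ≤ 2)]; norm_num
  have hγs : Real.sqrt γ ^ 2 = γ := Real.sq_sqrt hγ.le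
  have hγs0 : 0 < Real.sqrt γ := Real.sqrt_pos.mpr hγ
  set M : ℝ := max (Real.sqrt 2 / 2) s with hM
  have hM0 : 0 ≤ M := le_trans (by positivity) (le_max_left _ _)
  have hMsq : max (1/2) (s ^ 2) = M ^ 2 := by
    rcases le_total (Real.sqrt 2 / 2) s with hc | hc
    · rw [hM, max_eq_right hc, max_eq_right (by nlinarith [Real.sqrt_nonneg 2, h2])]
    · rw [hM, max_eq_left hc, max_eq_left (by nlinarith [Real.sqrt_nonneg 2, h2]), h2]
  rw [hMsq] at h
  have : t ^ 2 ≤ ((1 / Real.sqrt γ) * M) ^ 2 := by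
    rw [mul_pow, div_pow, one_pow, hγs, div_mul_eq_mul_div, le_div_iff₀ hγ]
    linarith
  have hR0 : 0 ≤ (1 / Real.sqrt γ) * M := by positivity
  nlinarith

/-- under the completeness condition with constant `γ > 0`, if `F ≠ 0`,
`λ = ‖F‖²`, and `d` solves `(JᵀJ + λLᵀL)d = −JᵀF`, then
`‖d‖ ≤ (1/√γ)·max{√2/2, ‖F‖}`. -/
theorem lmmss_direction_norm_bound
    (m n p : ℕ) (J : Matrix (Fin m) (Fin n) ℝ) (L : Matrix (Fin p) (Fin n) ℝ)
    (γ : ℝ) (hγ : 0 < γ)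
    (hcomp : ∀ v : EuclideanSpace ℝ (Fin n),
      ‖matCLM J v‖ ^ 2 + ‖matCLM L v‖ ^ 2 ≥ γ * ‖v‖ ^ 2)
    (F : EuclideanSpace ℝ (Fin m)) (hF : F ≠ 0)
    (d : EuclideanSpace ℝ (Fin n))
    (hd : matCLM (Jᵀ * J + ‖F‖ ^ 2 • (Lᵀ * L)) d = -(matCLM Jᵀ F)) :
    ‖d‖ ≤ (1 / Real.sqrt γ) * max (Real.sqrt 2 / 2) ‖F‖ := by
  have hs0 : 0 < ‖F‖ := norm_pos_iff.mpr hF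
  have key : ‖matCLM J d‖ ^ 2 + ‖F‖ ^ 2 * ‖matCLM L d‖ ^ 2
      = - inner ℝ (matCLM J d) F := by
    have h1 : inner ℝ (matCLM (Jᵀ * J + ‖F‖ ^ 2 • (Lᵀ * L)) d) d
        = (inner ℝ (-(matCLM Jᵀ F)) d : ℝ) := by rw [hd]
    rw [matCLM_add, matCLM_mul, matCLM_smul, matCLM_mul, inner_add_left,
      real_inner_smul_left, matCLM_transpose_inner, matCLM_transpose_inner,
      inner_neg_left, matCLM_transpose_inner] at h1
    rw [real_inner_self_eq_norm_sq, real_inner_self_eq_norm_sq] at h1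
    rw [real_inner_comm]
    linarith [h1]
  have hcs : - inner ℝ (matCLM J d) F ≤ ‖F‖ * ‖matCLM J d‖ := by
    have h1 := abs_real_inner_le_norm (matCLM J d) F
    have h2 := neg_abs_le (inner ℝ (matCLM J d) F : ℝ)
    nlinarith
  have hkey : ‖matCLM J d‖ ^ 2 + ‖F‖ ^ 2 * ‖matCLM L d‖ ^ 2 ≤ ‖F‖ * ‖matCLM J d‖ := by
    linarith
  have hmax := lmmss_aux2 ‖F‖ ‖matCLM J d‖ ‖matCLM L d‖ hs0 (norm_nonneg _) (norm_nonneg _) hkey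
  have hγd : γ * ‖d‖ ^ 2 ≤ max (1/2) (‖F‖ ^ 2) := le_trans (hcomp d) hmax
  exact lmmss_aux γ ‖F‖ ‖d‖ hγ (norm_nonneg _) (norm_nonneg _) hγd
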